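/- Let (S, (A_i)_{i=1}^m, H, P, (R_i)_{i=1}^m) be a tabular episodic Markov game satisfying Condition 1 with target policy π† and worse policy π⁻. Under the d-portion attack: (i) for every agent i and every state s, Ṽ^{π†}_{i,1}(s) = Ṽ^{†,π†_{-i}}_{i,1}(s), i.e., π†_i is a best response of agent i toward π†_{-i} in the post-attack game, so π† is a Nash equilibrium of the post-attack game; and (ii) if every state s ∈ S is reachable (visited with positive probability) at every step h ∈ {1,…,H} when the post-attack game is played under π†, then π† is the unique Nash equilibrium of the post-attack game: any product policy that is a Nash equilibrium agrees with π† at every state and step. -/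

import Mathlib

open Finset

namespace MGAttack

variable {S : Type} [Fintype S] [DecidableEq S]
variable {m : ℕ} {A : Fin m → Type} [∀ i, Fintype (A i)] [∀ i, DecidableEq (A i)]

/-- `VA P f π n h s`: expected sum of `f` over `n` steps starting from step `h` in
state `s`, when joint actions are drawn from the joint pmf `π` and states evolve
according to `P`.  With `f` a mean-reward function this is the value function. -/
noncomputable def VA (P : ℕ → S → (∀ i, A i) → S → ℝ) (f : ℕ → S → (∀ i, A i) → ℝ)
    (π : ℕ → S → (∀ i, A i) → ℝ) : ℕ → ℕ → S → ℝ
  | 0, _, _ => 0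
  | n + 1, h, s => ∑ a, π h s a * (f h s a + ∑ s', P h s a s' * VA P f π n (h + 1) s')

/-- Value function `V^π_h(s)` for horizon `H` (steps `h, h+1, …, H`). -/
noncomputable def Vf (P : ℕ → S → (∀ i, A i) → S → ℝ) (R : ℕ → S → (∀ i, A i) → ℝ)
    (π : ℕ → S → (∀ i, A i) → ℝ) (H h : ℕ) (s : S) : ℝ :=
  VA P R π (H + 1 - h) h s

/-- Q-function `Q^π_h(s,a)` for horizon `H`. -/
noncomputable def Qf (P : ℕ → S → (∀ i, A i) → S → ℝ) (R : ℕ → S → (∀ i, A i) → ℝ)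
    (π : ℕ → S → (∀ i, A i) → ℝ) (H h : ℕ) (s : S) (a : ∀ i, A i) : ℝ :=
  R h s a + ∑ s', P h s a s' * VA P R π (H - h) (h + 1) s'

/-- Joint pmf of a Markov product policy. -/
noncomputable def jp (π : ∀ i : Fin m, ℕ → S → A i → ℝ) : ℕ → S → (∀ i, A i) → ℝ :=
  fun h s a => ∏ i, π i h s (a i)

/-- Joint action prescribed by a deterministic (product) policy. -/
def tgtJ (τ : ∀ i : Fin m, ℕ → S → A i) (h : ℕ) (s : S) : ∀ i, A i := fun i => τ i h s

/-- A deterministic policy viewed as a (point-mass) stochastic policy. -/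
noncomputable def detP (τ : ∀ i : Fin m, ℕ → S → A i) : ∀ i : Fin m, ℕ → S → A i → ℝ :=
  fun i h s b => if b = τ i h s then 1 else 0

/-- `P` is a transition kernel for the steps `1, …, H`. -/
def IsKernel (H : ℕ) (P : ℕ → S → (∀ i, A i) → S → ℝ) : Prop :=
  ∀ h ∈ Finset.Icc 1 H, ∀ s a, (∀ s', 0 ≤ P h s a s') ∧ ∑ s', P h s a s' = 1

/-- `π` is a Markov product policy for the steps `1, …, H`. -/
def IsPolicy (H : ℕ) (π : ∀ i : Fin m, ℕ → S → A i → ℝ) : Prop :=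
  ∀ i : Fin m, ∀ h ∈ Finset.Icc 1 H, ∀ s, (∀ b, 0 ≤ π i h s b) ∧ ∑ b, π i h s b = 1

/-- `πi` is a Markov policy for the single agent `i`. -/
def IsPolicyI (H : ℕ) {i : Fin m} (πi : ℕ → S → A i → ℝ) : Prop :=
  ∀ h ∈ Finset.Icc 1 H, ∀ s, (∀ b, 0 ≤ πi h s b) ∧ ∑ b, πi h s b = 1

/-- The mean rewards all lie in `[0,1]`. -/
def IsReward (H : ℕ) (R : Fin m → ℕ → S → (∀ i, A i) → ℝ) : Prop :=
  ∀ i, ∀ h ∈ Finset.Icc 1 H, ∀ s a, R i h s a ∈ Set.Icc (0 : ℝ) 1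

/-- `d_h(s,a) = m/2 + (1/2) ∑_i 1(a_i = π†_{i,h}(s))` of the `d`-portion attack. -/
noncomputable def dfun (τ : ∀ i : Fin m, ℕ → S → A i) (h : ℕ) (s : S) (a : ∀ i, A i) : ℝ :=
  (m : ℝ) / 2 + (∑ i, if a i = τ i h s then (1 : ℝ) else 0) / 2

/-- Post-attack mean rewards of the `d`-portion attack (target `τ`, worse policy `τ'`). -/
noncomputable def Rport (R : Fin m → ℕ → S → (∀ i, A i) → ℝ) (τ τ' : ∀ i : Fin m, ℕ → S → A i)
    (i : Fin m) : ℕ → S → (∀ i, A i) → ℝ :=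
  fun h s a => (dfun τ h s a / m) * R i h s (tgtJ τ h s)
    + (1 - dfun τ h s a / m) * R i h s (tgtJ τ' h s)

/-- Post-attack transition probabilities of the `d`-portion attack. -/
noncomputable def Pport (P : ℕ → S → (∀ i, A i) → S → ℝ) (τ τ' : ∀ i : Fin m, ℕ → S → A i) :
    ℕ → S → (∀ i, A i) → S → ℝ :=
  fun h s a s' => (dfun τ h s a / m) * P h s (tgtJ τ h s) s'
    + (1 - dfun τ h s a / m) * P h s (tgtJ τ' h s) s'

/-- `Δ^{†−}_{i,h}(s) = Q^{π†}_{i,h}(s, π†_h(s)) − Q^{π†}_{i,h}(s, π⁻_h(s))` (original game). -/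
noncomputable def Δdag (P : ℕ → S → (∀ i, A i) → S → ℝ) (R : Fin m → ℕ → S → (∀ i, A i) → ℝ)
    (τ τ' : ∀ i : Fin m, ℕ → S → A i) (H : ℕ) (i : Fin m) (h : ℕ) (s : S) : ℝ :=
  Qf P (R i) (jp (detP τ)) H h s (tgtJ τ h s) - Qf P (R i) (jp (detP τ)) H h s (tgtJ τ' h s)

/-- Post-attack mean rewards of the `η`-gap attack; `ΔR i` is the reward spread of agent `i`. -/
noncomputable def Rgap (R : Fin m → ℕ → S → (∀ i, A i) → ℝ) (τ : ∀ i : Fin m, ℕ → S → A i)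
    (η : ℝ) (ΔR : Fin m → ℝ) (H : ℕ) (i : Fin m) : ℕ → S → (∀ i, A i) → ℝ :=
  fun h s a =>
    if a = tgtJ τ h s then R i h s a
    else R i h s (tgtJ τ h s) - (η + ((H - h : ℕ) : ℝ) * ΔR i) * (if a i = τ i h s then 0 else 1)

/-- Post-attack mean rewards of the mixed attack. -/
noncomputable def Rmix (R : Fin m → ℕ → S → (∀ i, A i) → ℝ) (τ : ∀ i : Fin m, ℕ → S → A i)
    (i : Fin m) : ℕ → S → (∀ i, A i) → ℝ :=
  fun h s a => (if a i = τ i h s then (1 : ℝ) else 0) * R i h s (tgtJ τ h s)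

/-- Post-attack transition probabilities of the mixed attack. -/
def Pmix (P : ℕ → S → (∀ i, A i) → S → ℝ) (τ : ∀ i : Fin m, ℕ → S → A i) :
    ℕ → S → (∀ i, A i) → S → ℝ :=
  fun h s a s' => P h s (tgtJ τ h s) s'

/-- Probability of being in state `s'` after `n` steps, starting from `(h, s)` and following
the deterministic policy `τ` under the transitions `P`. -/
noncomputable def reach (P : ℕ → S → (∀ i, A i) → S → ℝ) (τ : ∀ i : Fin m, ℕ → S → A i) :
    ℕ → ℕ → S → S → ℝ
  | 0, _, s, s' => if s' = s then 1 else 0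
  | n + 1, h, s, s' => ∑ t, P h s (tgtJ τ h s) t * reach P τ n (h + 1) t s'

/-- Expected sum of a state-dependent function along the Markov chain `Ps`. -/
noncomputable def SSum (Ps : ℕ → S → S → ℝ) (f : ℕ → S → ℝ) : ℕ → ℕ → S → ℝ
  | 0, _, _ => 0
  | n + 1, h, s => f h s + ∑ s', Ps h s s' * SSum Ps f n (h + 1) s'

end MGAttack

/-!
Under the `d`-portion attack the post-attack reward and transition at a joint action `a` are the
mixture, with weight `d_h(s,a)/m ∈ [1/2, 1]` on `π†_h(s)`, of the original ones at `π†_h(s)` and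
at `π⁻_h(s)`; in particular `π†` has the same values as in the original game. Against a product
policy `ρ` the weight averages to `1/2 + (∑_k ρ_k(π†_k(s) | s))/(2m)`, so when `π†` is played
afterwards, an agent's value at step `h` increases with the mass it puts on its target action,
with slope `Δ^{†−}_{i,h}(s)/(2m) > 0`. Backward induction gives (i).

For (ii) go backwards from step `H`. If `π` agrees with `π†` after step `h` but agent `i` puts
mass `< 1` on `π†_i` at `(h, s₀)`, switching to `π†_i` at step `h` alone gains at every state and
strictly at `s₀`. Every post-attack transition carries at least half of the `π†`-transition, so
at step 1 the gain is at least `2^{1-h}` times the probability of reaching `s₀`, which is positive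
from some state: this contradicts the Nash property.
-/

open Finset

namespace MGAttack

section ProductWeights

variable {ι : Type*} [Fintype ι] [DecidableEq ι] {κ : ι → Type*} [∀ i, Fintype (κ i)]

theorem sum_pi_prod_eq_one (p : ∀ i, κ i → ℝ) (hp : ∀ i, ∑ b, p i b = 1) :
    ∑ a : ∀ i, κ i, ∏ i, p i (a i) = 1 := by
  rw [← Fintype.prod_sum]
  simp [hp]

theorem sum_pi_prod_mul_apply (p : ∀ i, κ i → ℝ) (k : ι) (hp : ∀ i ≠ k, ∑ b, p i b = 1)
    (G : κ k → ℝ) : ∑ a : ∀ i, κ i, (∏ i, p i (a i)) * G (a k) = ∑ b, p k b * G b := by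
  set q := Function.update p k fun b => p k b * G b
  have hq : ∀ a : ∀ i, κ i, ∏ i, q i (a i) = (∏ i, p i (a i)) * G (a k) := by
    intro a
    simp only [q]
    rw [← mul_prod_erase _ _ (mem_univ k), ← mul_prod_erase _ _ (mem_univ k),
      prod_congr rfl fun i hi => by rw [Function.update_of_ne (ne_of_mem_erase hi)],
      Function.update_self]
    ring
  simp_rw [← hq, ← Fintype.prod_sum]
  rw [← mul_prod_erase _ _ (mem_univ k), prod_eq_one fun i hi => ?_]
  · simp [q]
  · simpa [q, Function.update_of_ne (ne_of_mem_erase hi)] using hp i (ne_of_mem_erase hi)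

end ProductWeights

theorem eq_ite_of_apply_eq_one {α : Type*} [Fintype α] [DecidableEq α] {p : α → ℝ}
    (hp0 : ∀ b, 0 ≤ p b) (hp1 : ∑ b, p b = 1) {x : α} (hx : p x = 1) (b : α) :
    p b = if b = x then 1 else 0 := by
  split_ifs with hb
  · rw [hb, hx]
  · have hrest : ∑ c ∈ univ.erase x, p c = 0 := by
      linarith [add_sum_erase univ p (mem_univ x)]
    exact (sum_eq_zero_iff_of_nonneg fun c _ => hp0 c).1 hrest b (mem_erase.2 ⟨hb, mem_univ b⟩)

variable {S : Type} {m : ℕ} {A : Fin m → Type}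

theorem jp_nonneg {ρ : ∀ i : Fin m, ℕ → S → A i → ℝ} {h : ℕ} {s : S}
    (hρ : ∀ j b, 0 ≤ ρ j h s b) (a : ∀ i, A i) : 0 ≤ jp ρ h s a :=
  prod_nonneg fun j _ => hρ j (a j)

theorem jp_update_update_of_ne (π : ∀ i : Fin m, ℕ → S → A i → ℝ) (i : Fin m) {h j : ℕ}
    (ρ : S → A i → ℝ) (hj : j ≠ h) :
    jp (Function.update π i (Function.update (π i) h ρ)) j = jp π j := by
  have hk : ∀ k, Function.update π i (Function.update (π i) h ρ) k j = π k j := fun k => by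
    rcases eq_or_ne k i with rfl | hk
    · simp [Function.update_of_ne hj]
    · simp [hk]
  funext s a
  simp only [jp, hk]

section Reach

variable [Fintype S] [DecidableEq S] {P : ℕ → S → (∀ i, A i) → S → ℝ}
  {τ : ∀ i : Fin m, ℕ → S → A i}

theorem reach_nonneg : ∀ n h, (∀ j, h ≤ j → j < h + n → ∀ s t, 0 ≤ P j s (tgtJ τ j s) t) →
    ∀ s s', 0 ≤ reach P τ n h s s'
  | 0, _, _, _, _ => by rw [reach]; positivity
  | n + 1, h, hP, s, s' =>
    sum_nonneg fun t _ => mul_nonneg (hP h le_rfl (by omega) s t)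
      (reach_nonneg n (h + 1) (fun j hj hj' => hP j (by omega) (by omega)) t s')

theorem reach_mul_le_of_forall_le {δ : ℕ → S → ℝ} {l h : ℕ} (s₀ : S)
    (hP : ∀ j, l ≤ j → j < h → ∀ s t, 0 ≤ P j s (tgtJ τ j s) t)
    (hδ : ∀ j, l ≤ j → j < h → ∀ s, (∀ t, 0 ≤ δ (j + 1) t) →
      ∑ t, P j s (tgtJ τ j s) t / 2 * δ (j + 1) t ≤ δ j s)
    (hδh : ∀ t, 0 ≤ δ h t) :
    ∀ k j, l ≤ j → j + k = h → ∀ s, reach P τ k j s s₀ * δ h s₀ / 2 ^ k ≤ δ j s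
  | 0, j, _, hj, s => by
    obtain rfl : j = h := hj
    rw [reach, pow_zero, div_one]
    split_ifs with hs
    · rw [hs, one_mul]
    · rw [zero_mul]
      exact hδh s
  | k + 1, j, hl, hj, s => by
    have hnext := reach_mul_le_of_forall_le s₀ hP hδ hδh k (j + 1) (by omega) (by omega)
    have hreach : ∀ t, 0 ≤ reach P τ k (j + 1) t s₀ * δ h s₀ / 2 ^ k := fun t => by
      have := reach_nonneg k (j + 1) (fun j' hj' hj'' => hP j' (by omega) (by omega)) t s₀
      have := hδh s₀
      positivity
    calc reach P τ (k + 1) j s s₀ * δ h s₀ / 2 ^ (k + 1)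
        = ∑ t, P j s (tgtJ τ j s) t / 2 * (reach P τ k (j + 1) t s₀ * δ h s₀ / 2 ^ k) := by
          rw [reach, sum_mul, sum_div]
          exact sum_congr rfl fun t _ => by ring
      _ ≤ ∑ t, P j s (tgtJ τ j s) t / 2 * δ (j + 1) t :=
          sum_le_sum fun t _ => mul_le_mul_of_nonneg_left (hnext t)
            (div_nonneg (hP j hl (by omega) s t) zero_le_two)
      _ ≤ δ j s := hδ j hl (by omega) s fun t => (hreach t).trans (hnext t)

end Reach

section DecidableActions

variable [∀ i, DecidableEq (A i)] {P : ℕ → S → (∀ i, A i) → S → ℝ}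
  {τ τ' : ∀ i : Fin m, ℕ → S → A i} {h : ℕ} {s : S}

theorem jp_detP (τ : ∀ i : Fin m, ℕ → S → A i) (h : ℕ) (s : S) (a : ∀ i, A i) :
    jp (detP τ) h s a = if a = tgtJ τ h s then 1 else 0 := by
  simp [jp, detP, tgtJ, prod_boole, funext_iff]

theorem dfun_tgtJ : dfun τ h s (tgtJ τ h s) = m := by
  simp [dfun, tgtJ]

theorem dfun_div_mem_Icc (hm : 0 < m) (a : ∀ i, A i) :
    dfun τ h s a / m ∈ Set.Icc (1 / 2) 1 := by
  have hind : ∀ k, (if a k = τ k h s then (1 : ℝ) else 0) ∈ Set.Icc 0 1 := fun k => by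
    split_ifs <;> norm_num
  have h0 := sum_nonneg fun k (_ : k ∈ univ) => (hind k).1
  have h1 := sum_le_sum fun k (_ : k ∈ univ) => (hind k).2
  simp only [sum_const, card_univ, Fintype.card_fin, nsmul_eq_mul, mul_one] at h1
  have hmR : (0 : ℝ) < m := by exact_mod_cast hm
  rw [Set.mem_Icc, le_div_iff₀ hmR, div_le_one hmR, dfun]
  constructor <;> linarith

theorem Pport_nonneg (hm : 0 < m) (hP : ∀ b t, 0 ≤ P h s b t) (a : ∀ i, A i) (t : S) :
    0 ≤ Pport P τ τ' h s a t := by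
  obtain ⟨hd0, hd1⟩ := dfun_div_mem_Icc (τ := τ) (h := h) (s := s) hm a
  exact add_nonneg (mul_nonneg (by linarith) (hP _ t)) (mul_nonneg (by linarith) (hP _ t))

theorem Pport_tgtJ_div_two_le (hm : 0 < m) (hP : ∀ b t, 0 ≤ P h s b t) (a : ∀ i, A i)
    (t : S) : Pport P τ τ' h s (tgtJ τ h s) t / 2 ≤ Pport P τ τ' h s a t := by
  obtain ⟨hd0, hd1⟩ := dfun_div_mem_Icc (τ := τ) (h := h) (s := s) hm a
  have hmR : (m : ℝ) ≠ 0 := by positivity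
  simp only [Pport, dfun_tgtJ, div_self hmR]
  nlinarith [hP (tgtJ τ h s) t, hP (tgtJ τ' h s) t]

end DecidableActions

section FiniteActions

variable [∀ i, Fintype (A i)] {H h : ℕ} {s : S}

theorem sum_jp_eq_one (ρ : ∀ i : Fin m, ℕ → S → A i → ℝ) (hρ : ∀ j, ∑ b, ρ j h s b = 1) :
    ∑ a, jp ρ h s a = 1 :=
  sum_pi_prod_eq_one (fun j => ρ j h s) hρ

theorem sum_apply_le {ρ : ∀ i : Fin m, ℕ → S → A i → ℝ} (τ : ∀ i : Fin m, ℕ → S → A i)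
    (hρ : ∀ j, (∀ b, 0 ≤ ρ j h s b) ∧ ∑ b, ρ j h s b = 1) : ∑ k, ρ k h s (τ k h s) ≤ m := by
  calc ∑ k, ρ k h s (τ k h s) ≤ ∑ k, ∑ b, ρ k h s b :=
        sum_le_sum fun k _ => single_le_sum (fun b _ => (hρ k).1 b) (mem_univ _)
    _ = m := by simp [fun k => (hρ k).2]

theorem IsPolicy.update {π : ∀ i : Fin m, ℕ → S → A i → ℝ} (hπ : IsPolicy H π)
    {i : Fin m} {πi : ℕ → S → A i → ℝ} (hπi : IsPolicyI H πi) :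
    IsPolicy H (Function.update π i πi) := fun j h hh s => by
  rcases eq_or_ne j i with rfl | hj
  · simpa using hπi h hh s
  · simpa [Function.update_of_ne hj] using hπ j h hh s

variable [∀ i, DecidableEq (A i)] {τ : ∀ i : Fin m, ℕ → S → A i}

theorem isPolicy_detP (H : ℕ) (τ : ∀ i : Fin m, ℕ → S → A i) : IsPolicy H (detP τ) :=
  fun _ _ _ _ => ⟨fun _ => by unfold detP; split_ifs <;> norm_num, by simp [detP]⟩

theorem isPolicyI_update_detP {π : ∀ i : Fin m, ℕ → S → A i → ℝ} (hπ : IsPolicy H π)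
    (i : Fin m) (h : ℕ) : IsPolicyI H (Function.update (π i) h (detP τ i h)) := fun j hj s => by
  rcases eq_or_ne j h with rfl | hjh
  · simpa using isPolicy_detP H τ i j hj s
  · simpa [Function.update_of_ne hjh] using hπ i j hj s

theorem jp_eq_jp_detP {π : ∀ i : Fin m, ℕ → S → A i → ℝ}
    (hπ : ∀ j s, (∀ b, 0 ≤ π j h s b) ∧ ∑ b, π j h s b = 1)
    (hτ : ∀ j s, π j h s (τ j h s) = 1) : jp π h = jp (detP τ) h := by
  funext s a
  simp only [jp, detP]
  exact prod_congr rfl fun j _ => eq_ite_of_apply_eq_one (hπ j s).1 (hπ j s).2 (hτ j s) _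

theorem sum_jp_detP_mul (g : (∀ i, A i) → ℝ) :
    ∑ a, jp (detP τ) h s a * g a = g (tgtJ τ h s) := by
  simp [jp_detP]

theorem sum_jp_mul_dfun (ρ : ∀ i : Fin m, ℕ → S → A i → ℝ) (hρ : ∀ j, ∑ b, ρ j h s b = 1) :
    ∑ a, jp ρ h s a * dfun τ h s a = m / 2 + (∑ k, ρ k h s (τ k h s)) / 2 := by
  have hmarg : ∀ k, ∑ a, jp ρ h s a * (if a k = τ k h s then (1 : ℝ) else 0)
      = ρ k h s (τ k h s) := fun k => by
    simpa [jp] using sum_pi_prod_mul_apply (fun j => ρ j h s) k (fun j _ => hρ j)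
      fun b => if b = τ k h s then (1 : ℝ) else 0
  calc ∑ a, jp ρ h s a * dfun τ h s a
      = (∑ a, jp ρ h s a) * (m / 2)
        + (∑ k, ∑ a, jp ρ h s a * (if a k = τ k h s then (1 : ℝ) else 0)) / 2 := by
        rw [sum_comm, sum_mul, sum_div, ← sum_add_distrib]
        refine sum_congr rfl fun a _ => ?_
        rw [dfun, ← mul_sum]
        ring
    _ = m / 2 + (∑ k, ρ k h s (τ k h s)) / 2 := by
        simp only [sum_jp_eq_one ρ hρ, hmarg, one_mul]

end FiniteActions

section Values

variable [Fintype S]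

noncomputable def lookahead (P : ℕ → S → (∀ i, A i) → S → ℝ) (f : ℕ → S → (∀ i, A i) → ℝ)
    (h : ℕ) (s : S) (a : ∀ i, A i) (W : S → ℝ) : ℝ :=
  f h s a + ∑ t, P h s a t * W t

variable {P : ℕ → S → (∀ i, A i) → S → ℝ} {f : ℕ → S → (∀ i, A i) → ℝ}
  {R : Fin m → ℕ → S → (∀ i, A i) → ℝ} {τ τ' : ∀ i : Fin m, ℕ → S → A i} {i : Fin m}
  {H h : ℕ} {s : S}

theorem lookahead_mono {a : ∀ i, A i} {W W' : S → ℝ} (hP : ∀ t, 0 ≤ P h s a t)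
    (hW : ∀ t, W t ≤ W' t) : lookahead P f h s a W ≤ lookahead P f h s a W' :=
  add_le_add le_rfl (sum_le_sum fun t _ => mul_le_mul_of_nonneg_left (hW t) (hP t))

theorem lookahead_sub_lookahead (a : ∀ i, A i) (W W' : S → ℝ) :
    lookahead P f h s a W' - lookahead P f h s a W = ∑ t, P h s a t * (W' t - W t) := by
  simp only [lookahead, mul_sub, sum_sub_distrib]
  ring

section Attack

variable [∀ i, DecidableEq (A i)]

theorem lookahead_port (a : ∀ i, A i) (W : S → ℝ) :
    lookahead (Pport P τ τ') (Rport R τ τ' i) h s a W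
      = lookahead P (R i) h s (tgtJ τ' h s) W + dfun τ h s a / m
        * (lookahead P (R i) h s (tgtJ τ h s) W - lookahead P (R i) h s (tgtJ τ' h s) W) := by
  simp only [lookahead, Rport, Pport, add_mul, sum_add_distrib, mul_assoc, ← mul_sum]
  ring

theorem lookahead_port_tgtJ (hm : m ≠ 0) (W : S → ℝ) :
    lookahead (Pport P τ τ') (Rport R τ τ' i) h s (tgtJ τ h s) W
      = lookahead P (R i) h s (tgtJ τ h s) W := by
  rw [lookahead_port, dfun_tgtJ, div_self (Nat.cast_ne_zero.2 hm)]
  ring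

end Attack

variable [∀ i, Fintype (A i)]

theorem VA_succ (π : ℕ → S → (∀ i, A i) → ℝ) (n : ℕ) :
    VA P f π (n + 1) h s = ∑ a, π h s a * lookahead P f h s a (VA P f π n (h + 1)) :=
  rfl

theorem Vf_eq_sum_lookahead (π : ℕ → S → (∀ i, A i) → ℝ) (hh : h ≤ H) :
    Vf P f π H h s = ∑ a, π h s a * lookahead P f h s a (Vf P f π H (h + 1)) := by
  rw [Vf, show H + 1 - h = H + 1 - (h + 1) + 1 by omega]
  rfl

theorem VA_congr (P : ℕ → S → (∀ i, A i) → S → ℝ) (f : ℕ → S → (∀ i, A i) → ℝ)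
    {π π' : ℕ → S → (∀ i, A i) → ℝ} :
    ∀ n h, (∀ j, h ≤ j → j < h + n → π j = π' j) → VA P f π n h = VA P f π' n h
  | 0, _, _ => rfl
  | n + 1, h, hπ => by
    funext s
    rw [VA_succ, VA_succ, hπ h le_rfl (by omega),
      VA_congr P f n (h + 1) fun j hj hj' => hπ j (by omega) (by omega)]

theorem Vf_congr {π π' : ℕ → S → (∀ i, A i) → ℝ} (hπ : ∀ j, h ≤ j → j ≤ H → π j = π' j) :
    Vf P f π H h = Vf P f π' H h :=
  funext <| congrFun <| VA_congr P f _ h fun j hj hj' => hπ j hj (by omega)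

variable [∀ i, DecidableEq (A i)]

theorem VA_jp_detP_succ (n : ℕ) :
    VA P f (jp (detP τ)) (n + 1) h s
      = lookahead P f h s (tgtJ τ h s) (VA P f (jp (detP τ)) n (h + 1)) := by
  rw [VA_succ, sum_jp_detP_mul]

theorem sum_jp_mul_lookahead_port (ρ : ∀ i : Fin m, ℕ → S → A i → ℝ)
    (hρ : ∀ j, ∑ b, ρ j h s b = 1) (W : S → ℝ) :
    ∑ a, jp ρ h s a * lookahead (Pport P τ τ') (Rport R τ τ' i) h s a W
      = lookahead P (R i) h s (tgtJ τ' h s) W + (m / 2 + (∑ k, ρ k h s (τ k h s)) / 2) / m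
        * (lookahead P (R i) h s (tgtJ τ h s) W - lookahead P (R i) h s (tgtJ τ' h s) W) := by
  have hsplit : ∀ a, jp ρ h s a * lookahead (Pport P τ τ') (Rport R τ τ' i) h s a W
      = jp ρ h s a * lookahead P (R i) h s (tgtJ τ' h s) W + jp ρ h s a * dfun τ h s a / m
        * (lookahead P (R i) h s (tgtJ τ h s) W - lookahead P (R i) h s (tgtJ τ' h s) W) :=
    fun a => by rw [lookahead_port]; ring
  simp only [hsplit, sum_add_distrib, ← sum_mul, ← sum_div, sum_jp_eq_one ρ hρ,
    sum_jp_mul_dfun ρ hρ, one_mul]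

theorem sum_Pport_tgtJ_div_two_mul_le (hm : 0 < m) (hP : ∀ b t, 0 ≤ P h s b t)
    {ρ : ∀ i : Fin m, ℕ → S → A i → ℝ} (hρ : ∀ j, (∀ b, 0 ≤ ρ j h s b) ∧ ∑ b, ρ j h s b = 1)
    {W W' : S → ℝ} (hW : ∀ t, 0 ≤ W' t - W t) :
    ∑ t, Pport P τ τ' h s (tgtJ τ h s) t / 2 * (W' t - W t)
      ≤ ∑ a, jp ρ h s a * lookahead (Pport P τ τ') f h s a W'
        - ∑ a, jp ρ h s a * lookahead (Pport P τ τ') f h s a W := by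
  calc ∑ t, Pport P τ τ' h s (tgtJ τ h s) t / 2 * (W' t - W t)
      = ∑ a, jp ρ h s a * ∑ t, Pport P τ τ' h s (tgtJ τ h s) t / 2 * (W' t - W t) := by
        rw [← sum_mul, sum_jp_eq_one ρ fun j => (hρ j).2, one_mul]
    _ ≤ ∑ a, jp ρ h s a * ∑ t, Pport P τ τ' h s a t * (W' t - W t) :=
        sum_le_sum fun a _ => mul_le_mul_of_nonneg_left
          (sum_le_sum fun t _ => mul_le_mul_of_nonneg_right
            (Pport_tgtJ_div_two_le hm hP a t) (hW t))
          (jp_nonneg (fun j => (hρ j).1) a)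
    _ = _ := by simp only [← sum_sub_distrib, ← mul_sub, lookahead_sub_lookahead]

theorem VA_port_jp_detP (hm : m ≠ 0) : ∀ n h s,
    VA (Pport P τ τ') (Rport R τ τ' i) (jp (detP τ)) n h s = VA P (R i) (jp (detP τ)) n h s
  | 0, _, _ => rfl
  | n + 1, h, s => by
    rw [VA_jp_detP_succ, VA_jp_detP_succ, lookahead_port_tgtJ hm]
    exact congrArg _ (funext (VA_port_jp_detP hm n (h + 1)))

theorem Δdag_eq_lookahead_sub (hm : m ≠ 0) :
    Δdag P R τ τ' H i h s
      = lookahead P (R i) h s (tgtJ τ h s)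
          (Vf (Pport P τ τ') (Rport R τ τ' i) (jp (detP τ)) H (h + 1))
        - lookahead P (R i) h s (tgtJ τ' h s)
          (Vf (Pport P τ τ') (Rport R τ τ' i) (jp (detP τ)) H (h + 1)) := by
  have hW : Vf (Pport P τ τ') (Rport R τ τ' i) (jp (detP τ)) H (h + 1)
      = VA P (R i) (jp (detP τ)) (H - h) (h + 1) :=
    funext fun t => by rw [Vf, Nat.add_sub_add_right, VA_port_jp_detP hm]
  rw [hW]
  rfl

theorem Vf_update_detP_le (hm : 0 < m) (hP : IsKernel H P)
    (hcond : ∀ i : Fin m, ∀ h ∈ Icc 1 H, ∀ s : S, 0 < Δdag P R τ τ' H i h s)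
    {πi : ℕ → S → A i → ℝ} (hπi : IsPolicyI H πi) (h1 : 1 ≤ h) (s : S) :
    Vf (Pport P τ τ') (Rport R τ τ' i) (jp (Function.update (detP τ) i πi)) H h s
      ≤ Vf (Pport P τ τ') (Rport R τ τ' i) (jp (detP τ)) H h s := by
  obtain ⟨k, hk⟩ : ∃ k, H + 1 - h = k := ⟨_, rfl⟩
  induction k generalizing h s with
  | zero =>
    rw [Vf, Vf, hk]
    exact le_rfl
  | succ k ih =>
    have hh : h ∈ Icc 1 H := mem_Icc.2 ⟨h1, by omega⟩
    have hq := fun j => ((isPolicy_detP H τ).update hπi) j h hh s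
    have hΔ := hcond i h hh s
    rw [Δdag_eq_lookahead_sub hm.ne'] at hΔ
    have hμ : (m / 2 + (∑ k, Function.update (detP τ) i πi k h s (τ k h s)) / 2) / m
        ≤ (1 : ℝ) := by
      rw [div_le_one (by exact_mod_cast hm)]
      linarith [sum_apply_le τ hq]
    rw [Vf_eq_sum_lookahead _ (mem_Icc.1 hh).2, Vf_eq_sum_lookahead _ (mem_Icc.1 hh).2,
      sum_jp_detP_mul, lookahead_port_tgtJ hm.ne']
    calc _ ≤ ∑ a, jp (Function.update (detP τ) i πi) h s a
            * lookahead (Pport P τ τ') (Rport R τ τ' i) h s a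
              (Vf (Pport P τ τ') (Rport R τ τ' i) (jp (detP τ)) H (h + 1)) :=
          sum_le_sum fun a _ => mul_le_mul_of_nonneg_left
            (lookahead_mono (Pport_nonneg hm (fun b => (hP h hh s b).1) a)
              fun t => ih (by omega) t (by omega))
            (jp_nonneg (fun j => (hq j).1) a)
      _ = _ := sum_jp_mul_lookahead_port _ (fun j => (hq j).2) _
      _ ≤ _ := by linarith [mul_le_of_le_one_left hΔ.le hμ]

theorem Vf_update_update_detP_sub (hm : 0 < m) {π : ∀ i : Fin m, ℕ → S → A i → ℝ}
    (hh : h ∈ Icc 1 H) (hπ : IsPolicy H π)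
    (hafter : ∀ j, h < j → j ≤ H → jp π j = jp (detP τ) j) (s : S) :
    Vf (Pport P τ τ') (Rport R τ τ' i)
        (jp (Function.update π i (Function.update (π i) h (detP τ i h)))) H h s
      - Vf (Pport P τ τ') (Rport R τ τ' i) (jp π) H h s
      = (1 - π i h s (τ i h s)) / (2 * m) * Δdag P R τ τ' H i h s := by
  set π' := Function.update π i (Function.update (π i) h (detP τ i h))
  have hπ' : IsPolicy H π' := hπ.update (isPolicyI_update_detP hπ i h)
  have hcont : Vf (Pport P τ τ') (Rport R τ τ' i) (jp π) H (h + 1)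
      = Vf (Pport P τ τ') (Rport R τ τ' i) (jp (detP τ)) H (h + 1) :=
    Vf_congr fun j hj hj' => hafter j (by omega) hj'
  have hcont' : Vf (Pport P τ τ') (Rport R τ τ' i) (jp π') H (h + 1)
      = Vf (Pport P τ τ') (Rport R τ τ' i) (jp (detP τ)) H (h + 1) :=
    (Vf_congr fun j hj _ => jp_update_update_of_ne π i _ (by omega)).trans hcont
  have hT : ∑ k, π' k h s (τ k h s) = ∑ k, π k h s (τ k h s) + (1 - π i h s (τ i h s)) := by
    have hk : ∀ k, π' k h s (τ k h s)
        = π k h s (τ k h s) + if k = i then 1 - π i h s (τ i h s) else 0 := fun k => by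
      rcases eq_or_ne k i with rfl | hk
      · simp [π', detP]
      · simp [π', hk]
    simp [hk, sum_add_distrib]
  have hmR : (m : ℝ) ≠ 0 := by positivity
  rw [Vf_eq_sum_lookahead _ (mem_Icc.1 hh).2, Vf_eq_sum_lookahead _ (mem_Icc.1 hh).2, hcont,
    hcont', sum_jp_mul_lookahead_port _ fun j => (hπ' j h hh s).2,
    sum_jp_mul_lookahead_port _ fun j => (hπ j h hh s).2, hT, Δdag_eq_lookahead_sub hm.ne']
  field_simp
  ring

def IsNash (P : ℕ → S → (∀ i, A i) → S → ℝ) (R : Fin m → ℕ → S → (∀ i, A i) → ℝ) (H : ℕ)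
    (π : ∀ i : Fin m, ℕ → S → A i → ℝ) : Prop :=
  ∀ i : Fin m, ∀ πi : ℕ → S → A i → ℝ, IsPolicyI H πi → ∀ s : S,
    Vf P (R i) (jp (Function.update π i πi)) H 1 s ≤ Vf P (R i) (jp π) H 1 s

variable [DecidableEq S]

theorem apply_eq_one_of_isNash_of_eq_after (hm : 0 < m) (hP : IsKernel H P)
    (hcond : ∀ i : Fin m, ∀ h ∈ Icc 1 H, ∀ s : S, 0 < Δdag P R τ τ' H i h s)
    (hreach : ∀ h ∈ Icc 1 H, ∀ s : S, ∃ s₁ : S, 0 < reach (Pport P τ τ') τ (h - 1) 1 s₁ s)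
    {π : ∀ j : Fin m, ℕ → S → A j → ℝ} (hπ : IsPolicy H π)
    (hNE : IsNash (Pport P τ τ') (Rport R τ τ') H π) (hh : h ∈ Icc 1 H)
    (hafter : ∀ j, h < j → j ≤ H → jp π j = jp (detP τ) j) (s₀ : S) :
    π i h s₀ (τ i h s₀) = 1 := by
  obtain ⟨h1, hH⟩ := mem_Icc.1 hh
  set πi := Function.update (π i) h (detP τ i h)
  set δ : ℕ → S → ℝ := fun j s => Vf (Pport P τ τ') (Rport R τ τ' i)
    (jp (Function.update π i πi)) H j s - Vf (Pport P τ τ') (Rport R τ τ' i) (jp π) H j s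
  have hgap : ∀ s, δ h s = (1 - π i h s (τ i h s)) / (2 * m) * Δdag P R τ τ' H i h s :=
    Vf_update_update_detP_sub hm hh hπ hafter
  have hle : ∀ s, π i h s (τ i h s) ≤ 1 := fun s =>
    (hπ i h hh s).2 ▸ single_le_sum (fun b _ => (hπ i h hh s).1 b) (mem_univ _)
  have hgap_nonneg : ∀ s, 0 ≤ δ h s := fun s => by
    rw [hgap]
    have := hcond i h hh s
    have : 0 ≤ 1 - π i h s (τ i h s) := by linarith [hle s]
    positivity
  have hP' : ∀ j, 1 ≤ j → j < h → ∀ s b t, 0 ≤ P j s b t := fun j hj hjh s b =>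
    (hP j (mem_Icc.2 ⟨hj, by omega⟩) s b).1
  have hstep : ∀ j, 1 ≤ j → j < h → ∀ s, (∀ t, 0 ≤ δ (j + 1) t) →
      ∑ t, Pport P τ τ' j s (tgtJ τ j s) t / 2 * δ (j + 1) t ≤ δ j s := fun j hj hjh s hδ => by
    have hoff : jp (Function.update π i πi) j = jp π j :=
      jp_update_update_of_ne π i _ (by omega)
    simp only [δ, Vf_eq_sum_lookahead _ (show j ≤ H by omega), hoff]
    exact sum_Pport_tgtJ_div_two_mul_le hm (hP' j hj hjh s)
      (fun k => hπ k j (mem_Icc.2 ⟨hj, by omega⟩) s) hδ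
  obtain ⟨s₁, hs₁⟩ := hreach h hh s₀
  have hprop := reach_mul_le_of_forall_le s₀
    (fun j hj hjh s => Pport_nonneg hm (hP' j hj hjh s) _) hstep hgap_nonneg
    (h - 1) 1 le_rfl (by omega) s₁
  have hNE₁ : δ 1 s₁ ≤ 0 := sub_nonpos.2 (hNE i πi (isPolicyI_update_detP hπ i h) s₁)
  by_contra hne
  have hgap_pos : 0 < δ h s₀ := by
    rw [hgap]
    have := hcond i h hh s₀
    have : 0 < 1 - π i h s₀ (τ i h s₀) := by linarith [lt_of_le_of_ne (hle s₀) hne]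
    positivity
  have : 0 < reach (Pport P τ τ') τ (h - 1) 1 s₁ s₀ * δ h s₀ / 2 ^ (h - 1) := by positivity
  linarith

theorem apply_eq_one_of_isNash (hm : 0 < m) (hP : IsKernel H P)
    (hcond : ∀ i : Fin m, ∀ h ∈ Icc 1 H, ∀ s : S, 0 < Δdag P R τ τ' H i h s)
    (hreach : ∀ h ∈ Icc 1 H, ∀ s : S, ∃ s₁ : S, 0 < reach (Pport P τ τ') τ (h - 1) 1 s₁ s)
    {π : ∀ j : Fin m, ℕ → S → A j → ℝ} (hπ : IsPolicy H π)
    (hNE : IsNash (Pport P τ τ') (Rport R τ τ') H π) (hh : h ∈ Icc 1 H) (i : Fin m) (s : S) :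
    π i h s (τ i h s) = 1 := by
  induction hk : H - h using Nat.strong_induction_on generalizing h i s with
  | _ k ih =>
    refine apply_eq_one_of_isNash_of_eq_after hm hP hcond hreach hπ hNE hh
      (fun j hj hjH => ?_) s
    have hj' : j ∈ Icc 1 H := mem_Icc.2 ⟨by omega, hjH⟩
    exact jp_eq_jp_detP (fun k s => hπ k j hj' s) fun k s => ih (H - j) (by omega) hj' k s rfl

end Values

theorem stmt5_general {S : Type} [Fintype S] [DecidableEq S]
    {m : ℕ} {A : Fin m → Type} [∀ i, Fintype (A i)] [∀ i, DecidableEq (A i)]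
    (H : ℕ) (hm : 1 ≤ m)
    (P : ℕ → S → (∀ i, A i) → S → ℝ) (hP : IsKernel H P)
    (R : Fin m → ℕ → S → (∀ i, A i) → ℝ)
    (τ τ' : ∀ i : Fin m, ℕ → S → A i)
    -- Condition 1
    (hcond : ∀ i : Fin m, ∀ h ∈ Finset.Icc 1 H, ∀ s : S, 0 < Δdag P R τ τ' H i h s) :
    (∀ i : Fin m, ∀ πi : ℕ → S → A i → ℝ, IsPolicyI H πi → ∀ s : S,
        Vf (Pport P τ τ') (Rport R τ τ' i) (jp (Function.update (detP τ) i πi)) H 1 s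
          ≤ Vf (Pport P τ τ') (Rport R τ τ' i) (jp (detP τ)) H 1 s)
    ∧ ((∀ h ∈ Finset.Icc 1 H, ∀ s : S, ∃ s₁ : S, 0 < reach (Pport P τ τ') τ (h - 1) 1 s₁ s) →
        ∀ π : ∀ j : Fin m, ℕ → S → A j → ℝ, IsPolicy H π →
          (∀ i : Fin m, ∀ πi : ℕ → S → A i → ℝ, IsPolicyI H πi → ∀ s : S,
            Vf (Pport P τ τ') (Rport R τ τ' i) (jp (Function.update π i πi)) H 1 s
              ≤ Vf (Pport P τ τ') (Rport R τ τ' i) (jp π) H 1 s) →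
          ∀ i : Fin m, ∀ h ∈ Finset.Icc 1 H, ∀ s : S, π i h s (τ i h s) = 1) :=
  ⟨fun _ _ hπi => Vf_update_detP_le hm hP hcond hπi le_rfl,
    fun hreach _ hπ hNE i _ hh s => apply_eq_one_of_isNash hm hP hcond hreach hπ hNE hh i s⟩

/-- Under Condition 1 and the `d`-portion attack: (i) for every agent `i`, `π†_i` is a best
response toward `π†_{-i}` in the post-attack game (so `π†` is a Nash equilibrium); and
(ii) if every state is reachable at every step under `π†` in the post-attack game, then
any product policy that is a Nash equilibrium of the post-attack game agrees with `π†`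
at every state and step. -/
theorem stmt5 {S : Type} [Fintype S] [DecidableEq S]
    {m : ℕ} {A : Fin m → Type} [∀ i, Fintype (A i)] [∀ i, DecidableEq (A i)]
    (H : ℕ) (hH : 1 ≤ H) (hm : 1 ≤ m)
    (P : ℕ → S → (∀ i, A i) → S → ℝ) (hP : IsKernel H P)
    (R : Fin m → ℕ → S → (∀ i, A i) → ℝ) (hR : IsReward H R)
    (τ τ' : ∀ i : Fin m, ℕ → S → A i)
    -- Condition 1
    (hcond : ∀ i : Fin m, ∀ h ∈ Finset.Icc 1 H, ∀ s : S, 0 < Δdag P R τ τ' H i h s) :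
    (∀ i : Fin m, ∀ πi : ℕ → S → A i → ℝ, IsPolicyI H πi → ∀ s : S,
        Vf (Pport P τ τ') (Rport R τ τ' i) (jp (Function.update (detP τ) i πi)) H 1 s
          ≤ Vf (Pport P τ τ') (Rport R τ τ' i) (jp (detP τ)) H 1 s)
    ∧ ((∀ h ∈ Finset.Icc 1 H, ∀ s : S, ∃ s₁ : S, 0 < reach (Pport P τ τ') τ (h - 1) 1 s₁ s) →
        ∀ π : ∀ j : Fin m, ℕ → S → A j → ℝ, IsPolicy H π →
          (∀ i : Fin m, ∀ πi : ℕ → S → A i → ℝ, IsPolicyI H πi → ∀ s : S,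
            Vf (Pport P τ τ') (Rport R τ τ' i) (jp (Function.update π i πi)) H 1 s
              ≤ Vf (Pport P τ τ') (Rport R τ τ' i) (jp π) H 1 s) →
          ∀ i : Fin m, ∀ h ∈ Finset.Icc 1 H, ∀ s : S, π i h s (τ i h s) = 1) :=
  stmt5_general H hm P hP R τ τ' hcond

end MGAttack
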